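/- Let L(z) = K(z-1)^6 (z-a)^3 (z-b) / z^5 where K = (11+5√5)/216, a = (-3+√5)/2, b = (7-3√5)/2, viewed as a Laurent polynomial over ℂ, and let Q_0 = 1, Q_1 = z + z^{-1}, Q_2 = -(9+4√5)z^2 + (20+8√5)z + z^{-2}, Q_3 = (47/2 + (21/2)√5)z^3 - (195/2 + (87/2)√5)z^2 + (255/2 + (111/2)√5)z + z^{-3}, Q_4 = -(9+4√5)z^4 + (130+58√5)z^3 - (630+282√5)z^2 + (910+406√5)z + z^{-4}. If R_0, R_1, R_2, R_3, R_4 ∈ ℂ[z] are polynomials with Σ_{j=0}^{4} (R_j ∘ L) · Q_j = 0 as a Laurent polynomial (equivalently, as a function on ℂ \ {0}), then R_0 = R_1 = R_2 = R_3 = R_4 = 0. Consequently, the representation of a solution of the moment problem for L in the form Σ_{j=0}^{4} (R_j ∘ L) · Q_j is unique. -/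

import Mathlib

/-!
Substituting `z ↦ z⁻¹` turns the minimal degrees `-5` of `L` and `-j` of `Q_j` into the degrees
`5` and `j`. Degrees of Laurent polynomials over a domain are additive, so a nonzero `R_j`
contributes a term `(R_j ∘ L) · Q_j` of degree `5 · deg R_j + j`. These degrees are distinct
modulo `5`, so the term of highest degree cannot cancel.
-/

/-- The Laurent polynomial `L(z) = K (z-1)^6 (z-a)^3 (z-b) / z^5` with
`K = (11+5√5)/216`, `a = (-3+√5)/2`, `b = (7-3√5)/2`. -/
noncomputable def Lpoly : LaurentPolynomial ℂ :=
  LaurentPolynomial.C ((11 + 5 * (Real.sqrt 5 : ℂ)) / 216) *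
    (LaurentPolynomial.T 1 - 1) ^ 6 *
    (LaurentPolynomial.T 1 - LaurentPolynomial.C ((-3 + (Real.sqrt 5 : ℂ)) / 2)) ^ 3 *
    (LaurentPolynomial.T 1 - LaurentPolynomial.C ((7 - 3 * (Real.sqrt 5 : ℂ)) / 2)) *
    LaurentPolynomial.T (-5)

/-- The Laurent polynomials `Q_0 = 1`, `Q_1`, `Q_2`, `Q_3`, `Q_4`. -/
noncomputable def Qpoly : Fin 5 → LaurentPolynomial ℂ
  | 0 => 1
  | 1 => LaurentPolynomial.T 1 + LaurentPolynomial.T (-1)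
  | 2 => LaurentPolynomial.C (-(9 + 4 * (Real.sqrt 5 : ℂ))) * LaurentPolynomial.T 2 +
      LaurentPolynomial.C (20 + 8 * (Real.sqrt 5 : ℂ)) * LaurentPolynomial.T 1 +
      LaurentPolynomial.T (-2)
  | 3 => LaurentPolynomial.C (47 / 2 + 21 / 2 * (Real.sqrt 5 : ℂ)) * LaurentPolynomial.T 3 -
      LaurentPolynomial.C (195 / 2 + 87 / 2 * (Real.sqrt 5 : ℂ)) * LaurentPolynomial.T 2 +
      LaurentPolynomial.C (255 / 2 + 111 / 2 * (Real.sqrt 5 : ℂ)) * LaurentPolynomial.T 1 +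
      LaurentPolynomial.T (-3)
  | 4 => LaurentPolynomial.C (-(9 + 4 * (Real.sqrt 5 : ℂ))) * LaurentPolynomial.T 4 +
      LaurentPolynomial.C (130 + 58 * (Real.sqrt 5 : ℂ)) * LaurentPolynomial.T 3 -
      LaurentPolynomial.C (630 + 282 * (Real.sqrt 5 : ℂ)) * LaurentPolynomial.T 2 +
      LaurentPolynomial.C (910 + 406 * (Real.sqrt 5 : ℂ)) * LaurentPolynomial.T 1 +
      LaurentPolynomial.T (-4)

open scoped Polynomial
open LaurentPolynomial

namespace LaurentPolynomial

section Semiring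

variable {R : Type*} [Semiring R]

@[simp]
theorem coeff_C_mul_T (a : R) (n m : ℤ) : (C a * T n).coeff m = if n = m then a else 0 := by
  rw [← single_eq_C_mul_T]
  exact Finsupp.single_apply

theorem degree_eq_of_coeff {f : R[T;T⁻¹]} {n : ℤ} (hn : f.coeff n ≠ 0)
    (h : ∀ m, n < m → f.coeff m = 0) : f.degree = n := by
  refine le_antisymm (Finset.max_le fun m hm => ?_) (Finset.le_max (Finsupp.mem_support_iff.2 hn))
  by_contra hlt
  exact Finsupp.mem_support_iff.1 hm (h m (by exact_mod_cast not_le.1 hlt))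

theorem exists_degree_eq_of_ne_zero {f : R[T;T⁻¹]} (hf : f ≠ 0) :
    ∃ n : ℤ, f.degree = n ∧ f.coeff n ≠ 0 ∧ ∀ m, f.coeff m ≠ 0 → m ≤ n := by
  obtain ⟨n, hn⟩ := WithBot.ne_bot_iff_exists.1 (mt degree_eq_bot_iff.1 hf)
  refine ⟨n, hn.symm, Finsupp.mem_support_iff.1 (Finset.mem_of_max hn.symm), fun m hm => ?_⟩
  have : (m : WithBot ℤ) ≤ f.degree := Finset.le_max (Finsupp.mem_support_iff.2 hm)
  exact WithBot.coe_le_coe.1 (hn ▸ this)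

theorem degree_add_eq_right_of_degree_lt {f g : R[T;T⁻¹]} (h : f.degree < g.degree) :
    (f + g).degree = g.degree :=
  AddMonoidAlgebra.supDegree_add_eq_right h

end Semiring

theorem degree_invert_eq_of_coeff {R : Type*} [CommSemiring R] {f : R[T;T⁻¹]} {n : ℤ}
    (hn : f.coeff (-n) ≠ 0) (h : ∀ m < -n, f.coeff m = 0) : (invert f).degree = n :=
  degree_eq_of_coeff (by rwa [invert_apply]) fun m hm => by
    rw [invert_apply]
    exact h _ (by omega)

theorem degree_T_sub_C {R : Type*} [Ring R] [Nontrivial R] {n : ℤ} (hn : n < 0) {c : R}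
    (hc : c ≠ 0) : (T n - C c).degree = 0 := by
  have hlt : (T n : R[T;T⁻¹]).degree < (C (-c)).degree := by
    rw [degree_T, degree_C (neg_ne_zero.2 hc)]
    exact_mod_cast hn
  rw [sub_eq_add_neg, ← map_neg, degree_add_eq_right_of_degree_lt hlt,
    degree_C (neg_ne_zero.2 hc)]

section Domain

variable {R : Type*} [CommRing R] [IsDomain R]

theorem degree_mul (f g : R[T;T⁻¹]) : (f * g).degree = f.degree + g.degree := by
  obtain rfl | hf := eq_or_ne f 0
  · simp
  obtain rfl | hg := eq_or_ne g 0
  · simp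
  obtain ⟨a, hfa, hfa0, hfa_max⟩ := exists_degree_eq_of_ne_zero hf
  obtain ⟨b, hgb, hgb0, hgb_max⟩ := exists_degree_eq_of_ne_zero hg
  have hcoeff : (f * g).coeff (a + b) = f.coeff a * g.coeff b := by
    refine AddMonoidAlgebra.coeff_mul_add_of_uniqueAdd fun x y hx hy hxy => ?_
    have := hfa_max x (Finsupp.mem_support_iff.1 hx)
    have := hgb_max y (Finsupp.mem_support_iff.1 hy)
    omega
  refine le_antisymm (AddMonoidAlgebra.supDegree_mul_le fun _ _ => WithBot.coe_add ..) ?_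
  rw [hfa, hgb, ← WithBot.coe_add]
  exact Finset.le_max (Finsupp.mem_support_iff.2 (hcoeff ▸ mul_ne_zero hfa0 hgb0))

theorem degree_pow (f : R[T;T⁻¹]) (n : ℕ) : (f ^ n).degree = n • f.degree := by
  induction n with
  | zero => simpa using degree_T (R := R) 0
  | succ n ih => rw [pow_succ, degree_mul, ih, succ_nsmul]

theorem degree_smul_of_ne_zero {c : R} (hc : c ≠ 0) (f : R[T;T⁻¹]) :
    (c • f).degree = f.degree := by
  rw [smul_eq_C_mul, degree_mul, degree_C hc, zero_add]

theorem degree_smul_le (c : R) (f : R[T;T⁻¹]) : (c • f).degree ≤ f.degree := by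
  obtain rfl | hc := eq_or_ne c 0
  · simp
  · exact (degree_smul_of_ne_zero hc f).le

theorem degree_aeval {f : R[T;T⁻¹]} {d : ℤ} (hf : f.degree = d) (hd : 0 < d) {p : R[X]}
    (hp : p ≠ 0) : (Polynomial.aeval f p).degree = (p.natDegree * d : ℤ) := by
  have hdeg (i : ℕ) : (f ^ i).degree = (i * d : ℤ) := by
    rw [degree_pow, hf, ← WithBot.coe_nsmul, nsmul_eq_mul]
  have hlead : (p.coeff p.natDegree • f ^ p.natDegree).degree = (p.natDegree * d : ℤ) := by
    rw [degree_smul_of_ne_zero (c := p.coeff p.natDegree) (Polynomial.leadingCoeff_ne_zero.2 hp),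
      hdeg]
  rw [Polynomial.aeval_eq_sum_range, ← hlead]
  refine (AddMonoidAlgebra.supDegree_leadingCoeff_sum_eq (Finset.self_mem_range_succ _)
    fun i hi hne => ?_).1
  change (_ • _ : R[T;T⁻¹]).degree < (_ • _ : R[T;T⁻¹]).degree
  refine (degree_smul_le _ _).trans_lt ?_
  rw [hlead, hdeg, WithBot.coe_lt_coe]
  have : i < p.natDegree := lt_of_le_of_ne (Finset.mem_range_succ_iff.1 hi) hne
  gcongr

theorem eq_zero_of_sum_aeval_mul_eq_zero {n : ℕ} {f : R[T;T⁻¹]} (hf : f.degree = n)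
    {g : Fin n → R[T;T⁻¹]} (hg : ∀ j, (g j).degree = j) {P : Fin n → R[X]}
    (h : ∑ j, Polynomial.aeval f (P j) * g j = 0) (j : Fin n) : P j = 0 := by
  classical
  by_contra hj
  have hdeg (i : Fin n) (hi : P i ≠ 0) :
      (Polynomial.aeval f (P i) * g i).degree = ((P i).natDegree * n + i : ℕ) := by
    rw [degree_mul, degree_aeval hf (by exact_mod_cast j.pos) hi, hg]
    norm_cast
  refine AddMonoidAlgebra.sum_ne_zero_of_injOn_supDegree' (D := ((↑) : ℤ → WithBot ℤ))
    (s := Finset.univ.filter fun i => P i ≠ 0) (f := fun i => Polynomial.aeval f (P i) * g i)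
    ⟨j, by simpa using hj, ?_⟩ ?_ ?_
  · intro h0
    have := hdeg j hj
    rw [h0, degree_zero] at this
    exact WithBot.bot_ne_coe this
  · intro i hi k hk hik
    simp only [Finset.coe_filter, Finset.mem_univ, true_and, Set.mem_ofPred_eq] at hi hk
    have hmod := congrArg (· % n) (Nat.cast_injective (WithBot.coe_injective
      ((hdeg i hi).symm.trans (hik.trans (hdeg k hk)))))
    simp only [Nat.mul_add_mod_self_right, Nat.mod_eq_of_lt i.isLt, Nat.mod_eq_of_lt k.isLt] at hmod
    exact Fin.ext hmod
  · rwa [Finset.sum_filter_of_ne fun i _ hi => by rintro hP; simp [hP] at hi]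

end Domain

end LaurentPolynomial

theorem degree_invert_Lpoly : (invert Lpoly).degree = 5 := by
  have h5 : Real.sqrt 5 ^ 2 = 5 := Real.sq_sqrt (by norm_num)
  have hK : (11 + 5 * (Real.sqrt 5 : ℂ)) / 216 ≠ 0 := by
    have : (11 + 5 * Real.sqrt 5) / 216 ≠ 0 := by positivity
    exact_mod_cast this
  have ha : (-3 + (Real.sqrt 5 : ℂ)) / 2 ≠ 0 := by
    have : (-3 + Real.sqrt 5) / 2 ≠ 0 := by intro h; nlinarith
    exact_mod_cast this
  have hb : (7 - 3 * (Real.sqrt 5 : ℂ)) / 2 ≠ 0 := by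
    have : (7 - 3 * Real.sqrt 5) / 2 ≠ 0 := by intro h; nlinarith
    exact_mod_cast this
  have hneg : (-1 : ℤ) < 0 := by norm_num
  have h1 : (T (-1) - 1 : ℂ[T;T⁻¹]).degree = 0 := by
    simpa using degree_T_sub_C (R := ℂ) hneg one_ne_zero
  simp only [Lpoly, map_mul, map_pow, map_sub, map_one, invert_C, invert_T,
    degree_mul, degree_pow, degree_C hK, h1, degree_T_sub_C hneg ha, degree_T_sub_C hneg hb,
    degree_T]
  norm_num

theorem degree_invert_Qpoly (j : Fin 5) : (invert (Qpoly j)).degree = j := by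
  fin_cases j <;> refine degree_invert_eq_of_coeff ?_ fun m hm => ?_ <;>
    simp only [Qpoly, ← T_zero, AddMonoidAlgebra.coeff_add, AddMonoidAlgebra.coeff_sub,
      Finsupp.add_apply, Finsupp.sub_apply, coeff_C_mul_T, T_apply] at * <;>
    split_ifs <;> first | omega | norm_num

/-- If `R_0, …, R_4 ∈ ℂ[z]` satisfy `Σ_{j=0}^{4} (R_j ∘ L) · Q_j = 0` as a Laurent
polynomial, then `R_0 = ⋯ = R_4 = 0`; hence the representation of a solution of the
moment problem for `L` in this form is unique. -/
theorem stmt18 (R : Fin 5 → Polynomial ℂ)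
    (h : (∑ j : Fin 5, Polynomial.aeval Lpoly (R j) * Qpoly j) = 0) :
    ∀ j, R j = 0 := by
  have hinv := congrArg invert h
  simp only [map_sum, map_mul, map_zero, ← Polynomial.aeval_algHom_apply] at hinv
  exact eq_zero_of_sum_aeval_mul_eq_zero degree_invert_Lpoly degree_invert_Qpoly hinv
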